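/- arXiv:2310.06658 — 2 statements merged into one kernel-verified Lean document; each statement's English description precedes it below -/
import Mathlib

section
/- Let (u, μ) be a pair in 𝒟 and suppose the distribution ω = u − u'' is a positive Borel measure ν on ℝ, i.e. ∫_ℝ h dν = ∫_ℝ u h dx + ∫_ℝ u' h' dx for every compactly supported h ∈ H¹(ℝ). Then the function x ↦ e^{−x}(u(x) + u'(x)) has a representative (equal to it Lebesgue-almost everywhere) that is non-increasing and non-negative on ℝ and tends to 0 as x → ∞. -/
open MeasureTheory Filter Set

noncomputable section

/-- An element of the phase space `𝒟`: a pair `(u, μ)` where `u ∈ H¹_loc(ℝ)` (recorded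
together with a derivative `u'`), `μ` is a positive Borel measure dominating
`(u² + u'²) dx` and `υ` is the excess measure, subject to the growth restrictions
at `-∞` and `+∞`. -/
structure PhaseD where
  u : ℝ → ℝ
  u' : ℝ → ℝ
  μ : Measure ℝ
  υ : Measure ℝ
  meas_u' : Measurable u'
  ftc : ∀ a b : ℝ, u b - u a = ∫ x in a..b, u' x
  locInt : LocallyIntegrable u' volume
  locSq : LocallyIntegrable (fun x => (u' x) ^ 2) volume
  decomp : μ = υ + volume.withDensity (fun x => ENNReal.ofReal ((u x) ^ 2 + (u' x) ^ 2))
  minusCond :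
    (∫⁻ s in Iio (0 : ℝ), ENNReal.ofReal (Real.exp (-s) * ((u s) ^ 2 + (u' s) ^ 2))) +
      (∫⁻ s in Iio (0 : ℝ), ENNReal.ofReal (Real.exp (-s)) ∂υ) < ⊤
  plusCond :
    Filter.limsup (fun x : ℝ =>
      ENNReal.ofReal (Real.exp x) *
        ((∫⁻ s in Ioi x, ENNReal.ofReal (Real.exp (-s) * (u s + u' s) ^ 2)) +
          ∫⁻ s in Ici x, ENNReal.ofReal (Real.exp (-s)) ∂υ)) Filter.atTop < ⊤

/-- The function `w̃(x) = -(u(log x) + u'(log x))/x`. -/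
def tildeW (D : PhaseD) : ℝ → ℝ := fun x => -(D.u (Real.log x) + D.u' (Real.log x)) / x

/-- The measure `υ̃`, i.e. the pushforward under `exp` of `e^{-s} dυ(s)`, so that
`υ̃(B) = ∫_{log B} e^{-s} dυ(s)` for Borel `B ⊆ (0,∞)` and `υ̃({0}) = 0`. -/
def tildeV (D : PhaseD) : Measure ℝ :=
  (D.υ.withDensity fun s => ENNReal.ofReal (Real.exp (-s))).map Real.exp

/-- Convergence of a sequence of pairs to a pair in `𝒟`. -/
def ConvD (Dk : ℕ → PhaseD) (D : PhaseD) : Prop :=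
  (∀ x : ℝ, Tendsto (fun k => (Dk k).u x) atTop (nhds (D.u x))) ∧
    ∀ᵐ x : ℝ ∂volume,
      Tendsto (fun k => ∫⁻ s in Iio x, ENNReal.ofReal (Real.exp (-s)) ∂(Dk k).μ) atTop
        (nhds (∫⁻ s in Iio x, ENNReal.ofReal (Real.exp (-s)) ∂D.μ))

/-- The functional `E(u,μ)`. -/
def Efun (D : PhaseD) : ENNReal :=
  ⨆ x : ℝ, ENNReal.ofReal (Real.exp (x / 2)) *
    ((∫⁻ s in Ioi x, ENNReal.ofReal (Real.exp (-s) * (D.u s + D.u' s) ^ 2)) +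
      ∫⁻ s in Ici x, ENNReal.ofReal (Real.exp (-s)) ∂D.υ) ^ (1 / 2 : ℝ)


/-- A compactly supported test function `h ∈ H¹_c(ℝ)`, recorded with its derivative. -/
def TestH1 (h h' : ℝ → ℝ) : Prop :=
  HasCompactSupport h ∧ Measurable h' ∧
    (∀ a b : ℝ, h b - h a = ∫ x in a..b, h' x) ∧ MemLp h' 2 volume

/-- The distribution `ω = u - u''` equals the positive Borel measure `ν`, i.e.
`∫ h dν = ∫ u h dx + ∫ u' h' dx` for every compactly supported `h ∈ H¹(ℝ)`. -/
def PosMeasRepr (D : PhaseD) (ν : Measure ℝ) : Prop :=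
  ∀ h h' : ℝ → ℝ, TestH1 h h' →
    ∫ x, h x ∂ν = (∫ x, D.u x * h x) + ∫ x, D.u' x * h' x

open Function Real
open scoped Topology

/-! Put `w(x) = e^{-x}(u(x) + u'(x))` and let `W` be a primitive of `w`. Testing `ω ≥ 0` against
`h = e^{-x} φ` and integrating `u' h` by parts gives `∫ h dν = ∫ w φ'`; for a hat function `φ`
on `[x, z]` with peak at `y` the right side is the difference of the slopes of `W` on `[x, y]`
and on `[y, z]`, so `W` is concave. Its right derivative is then an antitone representative of
`w`. Finally `∫^∞ e^{x} w² = ∫^∞ e^{-x} (u + u')² < ∞` by the growth condition at `+∞`, which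
forces an antitone function to be nonnegative with limit `0`. -/

lemma MeasureTheory.LocallyIntegrable.intervalIntegrable {E : Type*} [NormedAddCommGroup E]
    {f : ℝ → E} {μ : Measure ℝ} [IsLocallyFiniteMeasure μ] (hf : LocallyIntegrable f μ)
    (a b : ℝ) : IntervalIntegrable f μ a b :=
  (hf.integrableOn_isCompact isCompact_uIcc).intervalIntegrable

lemma IntervalIntegrable.mul_bdd {f g : ℝ → ℝ} {a b c : ℝ} (hf : IntervalIntegrable f volume a b)
    (hg : AEStronglyMeasurable g volume) (hgc : ∀ x, |g x| ≤ c) :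
    IntervalIntegrable (fun x => f x * g x) volume a b := by
  rw [intervalIntegrable_iff] at hf ⊢
  exact hf.mul_bdd hg.restrict (ae_of_all _ hgc)

lemma hasCompactSupport_of_support_subset_Icc {f : ℝ → ℝ} {a b : ℝ} (h : support f ⊆ Icc a b) :
    HasCompactSupport f :=
  HasCompactSupport.intro isCompact_Icc fun _ hx => notMem_support.1 fun hfx => hx (h hfx)

lemma integrable_of_bound_of_support_subset_Icc {f : ℝ → ℝ} {a b C : ℝ} (hm : Measurable f)
    (hC : ∀ t, |f t| ≤ C) (hab : support f ⊆ Icc a b) : Integrable f := by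
  rw [← memLp_one_iff_integrable]
  exact (hasCompactSupport_of_support_subset_Icc hab).memLp_of_bound hm.aestronglyMeasurable C
    (ae_of_all _ hC)

lemma ConcaveOn.antitoneOn_rightDeriv {S : Set ℝ} {f : ℝ → ℝ} (hf : ConcaveOn ℝ S f) :
    AntitoneOn (fun x => derivWithin f (Ioi x) x) (interior S) := fun x hx y hy hxy => by
  simpa [derivWithin.neg] using hf.neg.monotoneOn_rightDeriv hx hy hxy

lemma lintegral_Ioi_sq_eq_top_of_le_abs {g : ℝ → ℝ} {a b c : ℝ} (hc : 0 < c)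
    (hg : ∀ s, b ≤ s → c ≤ |g s|) : ∫⁻ s in Ioi a, ENNReal.ofReal (g s ^ 2) = ⊤ := by
  refine top_le_iff.1 (le_trans ?_ (lintegral_mono_set (Ioi_subset_Ioi (le_max_left a b))))
  calc (⊤ : ENNReal) = ∫⁻ _ in Ioi (max a b), ENNReal.ofReal (c ^ 2) := by
        rw [setLIntegral_const, volume_Ioi, ENNReal.mul_top (by positivity)]
    _ ≤ ∫⁻ s in Ioi (max a b), ENNReal.ofReal (g s ^ 2) :=
        setLIntegral_mono' measurableSet_Ioi fun s hs => ENNReal.ofReal_le_ofReal <| by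
          have := hg s ((le_max_right a b).trans hs.le)
          nlinarith [sq_abs (g s), abs_nonneg (g s)]

theorem Antitone.tendsto_atTop_zero_of_lintegral_sq_lt_top {g : ℝ → ℝ} (hg : Antitone g) {a : ℝ}
    (hint : ∫⁻ s in Ioi a, ENNReal.ofReal (g s ^ 2) < ⊤) : Tendsto g atTop (𝓝 0) := by
  have hnonneg : ∀ x, 0 ≤ g x := fun x => by
    by_contra! hx
    refine hint.ne (lintegral_Ioi_sq_eq_top_of_le_abs (b := x) (neg_pos.2 hx) fun s hs => ?_)
    rw [abs_of_neg ((hg hs).trans_lt hx)]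
    exact neg_le_neg (hg hs)
  have hbdd : BddBelow (range g) := ⟨0, forall_mem_range.2 hnonneg⟩
  convert tendsto_atTop_ciInf hg hbdd
  refine le_antisymm (le_ciInf hnonneg) (not_lt.1 fun hpos => hint.ne ?_)
  exact lintegral_Ioi_sq_eq_top_of_le_abs hpos (b := 0) fun s _ =>
    (ciInf_le hbdd s).trans (le_abs_self _)

section Primitive

variable {f f' g g' : ℝ → ℝ}

lemma eq_add_integral_of_forall_sub_eq_integral (hf : ∀ a b, f b - f a = ∫ x in a..b, f' x)
    (c : ℝ) : f = fun x => f c + ∫ t in c..x, f' t :=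
  funext fun x => by linarith [hf c x]

variable (hf' : LocallyIntegrable f' volume) (hf : ∀ a b, f b - f a = ∫ x in a..b, f' x)
include hf' hf

lemma continuous_of_forall_sub_eq_integral : Continuous f := by
  rw [eq_add_integral_of_forall_sub_eq_integral hf 0]
  exact continuous_const.add (intervalIntegral.continuous_primitive hf'.intervalIntegrable 0)

lemma absolutelyContinuousOnInterval_of_forall_sub_eq_integral (a b : ℝ) :
    AbsolutelyContinuousOnInterval f a b := by
  rw [eq_add_integral_of_forall_sub_eq_integral hf a]
  exact (LipschitzWith.const (f a)).lipschitzOnWith.absolutelyContinuousOnInterval.add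
    ((hf'.intervalIntegrable a b).absolutelyContinuousOnInterval_intervalIntegral left_mem_uIcc)

lemma ae_deriv_eq_of_forall_sub_eq_integral : ∀ᵐ x, deriv f x = f' x := by
  filter_upwards [LocallyIntegrable.ae_hasDerivAt_integral hf'] with x hx
  rw [eq_add_integral_of_forall_sub_eq_integral hf 0]
  exact ((hx 0).const_add (f 0)).deriv

lemma integral_deriv_mul_eq_sub_of_forall_sub_eq_integral
    (hg' : LocallyIntegrable g' volume) (hg : ∀ a b, g b - g a = ∫ x in a..b, g' x) (a b : ℝ) :
    ∫ x in a..b, f' x * g x + f x * g' x = f b * g b - f a * g a := by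
  rw [← AbsolutelyContinuousOnInterval.integral_deriv_mul_eq_sub
    (absolutelyContinuousOnInterval_of_forall_sub_eq_integral hf' hf a b)
    (absolutelyContinuousOnInterval_of_forall_sub_eq_integral hg' hg a b)]
  refine intervalIntegral.integral_congr_ae ?_
  filter_upwards [ae_deriv_eq_of_forall_sub_eq_integral hf' hf,
    ae_deriv_eq_of_forall_sub_eq_integral hg' hg] with x hfx hgx _
  rw [hfx, hgx]

end Primitive

section ExpTest

variable {φ φ' : ℝ → ℝ} {a b C : ℝ}
  (hφ : ∀ s t, φ t - φ s = ∫ x in s..t, φ' x) (hφ'm : Measurable φ') (hφ'C : ∀ t, |φ' t| ≤ C)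
  (hφab : support φ ⊆ Ioo a b) (hφ'ab : support φ' ⊆ Ioc a b)

include hφab hφ'ab in
lemma support_exp_neg_mul_sub_subset : support (fun t => rexp (-t) * (φ' t - φ t)) ⊆ Ioc a b := by
  intro t ht
  by_contra hmem
  have hφt : φ t = 0 := notMem_support.1 fun h => hmem (Ioo_subset_Ioc_self (hφab h))
  have hφ't : φ' t = 0 := notMem_support.1 fun h => hmem (hφ'ab h)
  simp [hφt, hφ't] at ht

include hφ hφ'm hφ'C hφ'ab

lemma continuous_of_bound_of_support_subset_Ioc : Continuous φ :=
  continuous_of_forall_sub_eq_integral (integrable_of_bound_of_support_subset_Icc hφ'm hφ'C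
    (hφ'ab.trans Ioc_subset_Icc_self)).locallyIntegrable hφ

lemma sub_eq_integral_exp_neg_mul (s t : ℝ) :
    rexp (-t) * φ t - rexp (-s) * φ s = ∫ x in s..t, rexp (-x) * (φ' x - φ x) := by
  have hexp : ∀ s t, rexp (-t) - rexp (-s) = ∫ x in s..t, -rexp (-x) := fun s t => by
    rw [intervalIntegral.integral_eq_sub_of_hasDerivAt (fun x _ => by
      simpa using (Real.hasDerivAt_exp (-x)).comp x (hasDerivAt_neg x))
      ((by fun_prop : Continuous fun x => -rexp (-x)).intervalIntegrable _ _)]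
    rfl
  rw [← integral_deriv_mul_eq_sub_of_forall_sub_eq_integral
    (by fun_prop : Continuous fun x => -rexp (-x)).locallyIntegrable hexp
    (integrable_of_bound_of_support_subset_Icc hφ'm hφ'C
      (hφ'ab.trans Ioc_subset_Icc_self)).locallyIntegrable hφ]
  congr 1 with x
  ring

lemma measurable_exp_neg_mul_sub : Measurable fun t => rexp (-t) * (φ' t - φ t) := by
  have := continuous_of_bound_of_support_subset_Ioc hφ hφ'm hφ'C hφ'ab
  fun_prop

include hφab

lemma exists_bound_exp_neg_mul_sub : ∃ K, ∀ t, |rexp (-t) * (φ' t - φ t)| ≤ K := by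
  obtain ⟨M, hM⟩ := (hasCompactSupport_of_support_subset_Icc (hφab.trans Ioo_subset_Icc_self)
    ).exists_bound_of_continuous (continuous_of_bound_of_support_subset_Ioc hφ hφ'm hφ'C hφ'ab)
  refine ⟨rexp (-a) * (C + M), fun t => ?_⟩
  by_cases ht : t ∈ Ioc a b
  · rw [abs_mul, abs_of_pos (exp_pos _)]
    gcongr
    · exact ht.1.le
    · exact (abs_sub _ _).trans (add_le_add (hφ'C t) (hM t))
  · rw [notMem_support.1 fun h => ht (support_exp_neg_mul_sub_subset hφab hφ'ab h), abs_zero]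
    have hC : 0 ≤ C := (abs_nonneg _).trans (hφ'C a)
    have hM0 : 0 ≤ M := (norm_nonneg _).trans (hM a)
    positivity

lemma testH1_exp_neg_mul :
    TestH1 (fun t => rexp (-t) * φ t) (fun t => rexp (-t) * (φ' t - φ t)) := by
  have hm := measurable_exp_neg_mul_sub hφ hφ'm hφ'C hφ'ab
  obtain ⟨K, hK⟩ := exists_bound_exp_neg_mul_sub hφ hφ'm hφ'C hφab hφ'ab
  exact ⟨(hasCompactSupport_of_support_subset_Icc (hφab.trans Ioo_subset_Icc_self)).mul_left,
    hm, sub_eq_integral_exp_neg_mul hφ hφ'm hφ'C hφ'ab,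
    (hasCompactSupport_of_support_subset_Icc ((support_exp_neg_mul_sub_subset hφab hφ'ab).trans
      Ioc_subset_Icc_self)).memLp_of_bound hm.aestronglyMeasurable K (ae_of_all _ hK)⟩

end ExpTest

section Tent

def tentSlope (x y z t : ℝ) : ℝ :=
  (Ioc x y).indicator (fun _ => (y - x)⁻¹) t - (Ioc y z).indicator (fun _ => (z - y)⁻¹) t

/-- The hat function vanishing outside `(x, z)`, affine on `[x, y]` and on `[y, z]`, with
`tent x y z y = 1`. -/
def tent (x y z t : ℝ) : ℝ := ∫ s in x..t, tentSlope x y z s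

variable {x y z : ℝ}

lemma measurable_tentSlope : Measurable (tentSlope x y z) :=
  (measurable_const.indicator measurableSet_Ioc).sub (measurable_const.indicator measurableSet_Ioc)

lemma tentSlope_of_mem_left {t : ℝ} (ht : t ∈ Ioc x y) : tentSlope x y z t = (y - x)⁻¹ := by
  simp [tentSlope, ht, show t ∉ Ioc y z from fun h => h.1.not_ge ht.2]

lemma tentSlope_of_mem_right {t : ℝ} (ht : t ∈ Ioc y z) : tentSlope x y z t = -(z - y)⁻¹ := by
  simp [tentSlope, ht, show t ∉ Ioc x y from fun h => ht.1.not_ge h.2]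

lemma support_tentSlope_subset (hxy : x < y) (hyz : y < z) :
    support (tentSlope x y z) ⊆ Ioc x z := by
  intro t ht
  by_contra hmem
  refine ht ?_
  rw [tentSlope, indicator_of_notMem (fun h : t ∈ Ioc x y => hmem ⟨h.1, h.2.trans hyz.le⟩),
    indicator_of_notMem (fun h : t ∈ Ioc y z => hmem ⟨hxy.trans h.1, h.2⟩), sub_zero]

lemma abs_tentSlope_le (hxy : x < y) (hyz : y < z) (t : ℝ) :
    |tentSlope x y z t| ≤ (y - x)⁻¹ + (z - y)⁻¹ := by
  have h1 : 0 ≤ (y - x)⁻¹ := inv_nonneg.2 (sub_nonneg.2 hxy.le)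
  have h2 : 0 ≤ (z - y)⁻¹ := inv_nonneg.2 (sub_nonneg.2 hyz.le)
  unfold tentSlope
  simp only [indicator_apply]
  split_ifs <;> refine (abs_sub _ _).trans ?_ <;> simp [abs_of_nonneg, h1, h2, add_nonneg]

lemma tentSlope_nonneg_of_le (hxy : x ≤ y) {t : ℝ} (hty : t ≤ y) : 0 ≤ tentSlope x y z t := by
  rw [tentSlope, indicator_of_notMem (fun h : t ∈ Ioc y z => h.1.not_ge hty), sub_zero]
  exact indicator_nonneg (fun _ _ => inv_nonneg.2 (sub_nonneg.2 hxy)) t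

lemma tentSlope_nonpos_of_lt (hyz : y ≤ z) {t : ℝ} (hyt : y < t) : tentSlope x y z t ≤ 0 := by
  rw [tentSlope, indicator_of_notMem (fun h : t ∈ Ioc x y => hyt.not_ge h.2), zero_sub,
    neg_nonpos]
  exact indicator_nonneg (fun _ _ => inv_nonneg.2 (sub_nonneg.2 hyz)) t

variable (hxy : x < y) (hyz : y < z)
include hxy hyz

lemma integrable_tentSlope : Integrable (tentSlope x y z) :=
  integrable_of_bound_of_support_subset_Icc measurable_tentSlope (abs_tentSlope_le hxy hyz)
    ((support_tentSlope_subset hxy hyz).trans Ioc_subset_Icc_self)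

lemma tent_sub (s t : ℝ) : tent x y z t - tent x y z s = ∫ r in s..t, tentSlope x y z r :=
  intervalIntegral.integral_interval_sub_left ((integrable_tentSlope hxy hyz).intervalIntegrable)
    ((integrable_tentSlope hxy hyz).intervalIntegrable)

lemma integral_mul_tentSlope {f : ℝ → ℝ} (hf : IntervalIntegrable f volume x z) :
    ∫ t in x..z, f t * tentSlope x y z t =
      (y - x)⁻¹ * (∫ t in x..y, f t) - (z - y)⁻¹ * ∫ t in y..z, f t := by
  have hfs : ∀ a b, IntervalIntegrable f volume a b →
      IntervalIntegrable (fun t => f t * tentSlope x y z t) volume a b := fun a b h =>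
    h.mul_bdd measurable_tentSlope.aestronglyMeasurable (abs_tentSlope_le hxy hyz)
  have hy : y ∈ uIcc x z := mem_uIcc_of_le hxy.le hyz.le
  have hleft : ∫ t in x..y, f t * tentSlope x y z t = (y - x)⁻¹ * ∫ t in x..y, f t := by
    rw [← intervalIntegral.integral_const_mul]
    refine intervalIntegral.integral_congr_ae (ae_of_all _ fun t ht => ?_)
    rw [uIoc_of_le hxy.le] at ht
    rw [tentSlope_of_mem_left ht, mul_comm]
  have hright : ∫ t in y..z, f t * tentSlope x y z t = -(z - y)⁻¹ * ∫ t in y..z, f t := by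
    rw [← intervalIntegral.integral_const_mul]
    refine intervalIntegral.integral_congr_ae (ae_of_all _ fun t ht => ?_)
    rw [uIoc_of_le hyz.le] at ht
    rw [tentSlope_of_mem_right ht, mul_comm]
  rw [← intervalIntegral.integral_add_adjacent_intervals
    (hfs _ _ (hf.mono_set (uIcc_subset_uIcc_left hy)))
    (hfs _ _ (hf.mono_set (uIcc_subset_uIcc_right hy))), hleft, hright]
  ring

lemma tent_eq_zero_of_le {t : ℝ} (ht : t ≤ x) : tent x y z t = 0 := by
  rw [tent, intervalIntegral.integral_congr_ae (g := fun _ => 0) (ae_of_all _ fun s hs => ?_),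
    intervalIntegral.integral_zero]
  rw [uIoc_of_ge ht] at hs
  exact notMem_support.1 fun h => (support_tentSlope_subset hxy hyz h).1.not_ge hs.2

lemma tent_eq_zero_of_ge {t : ℝ} (ht : z ≤ t) : tent x y z t = 0 := by
  have hz : tent x y z z = 0 := by
    simpa [tent, hxy.ne', hyz.ne', sub_ne_zero] using
      integral_mul_tentSlope hxy hyz (f := 1) intervalIntegrable_const
  have h := tent_sub hxy hyz z t
  rw [hz, sub_zero] at h
  rw [h, intervalIntegral.integral_congr_ae (g := fun _ => 0) (ae_of_all _ fun s hs => ?_),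
    intervalIntegral.integral_zero]
  rw [uIoc_of_le ht] at hs
  exact notMem_support.1 fun h => hs.1.not_ge (support_tentSlope_subset hxy hyz h).2

lemma support_tent_subset : support (tent x y z) ⊆ Ioo x z := fun _ ht =>
  ⟨lt_of_not_ge fun h => ht (tent_eq_zero_of_le hxy hyz h),
    lt_of_not_ge fun h => ht (tent_eq_zero_of_ge hxy hyz h)⟩

lemma tent_nonneg (t : ℝ) : 0 ≤ tent x y z t := by
  rcases le_total t x with htx | hxt
  · exact (tent_eq_zero_of_le hxy hyz htx).ge
  rcases le_or_gt t y with hty | hyt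
  · exact intervalIntegral.integral_nonneg hxt fun s hs =>
      tentSlope_nonneg_of_le hxy.le (hs.2.trans hty)
  rcases le_total z t with hzt | htz
  · exact (tent_eq_zero_of_ge hxy hyz hzt).ge
  have h := tent_sub hxy hyz t z
  rw [tent_eq_zero_of_ge hxy hyz le_rfl, zero_sub] at h
  have h' : 0 ≤ ∫ s in t..z, -tentSlope x y z s := intervalIntegral.integral_nonneg htz
    fun s hs => neg_nonneg.2 (tentSlope_nonpos_of_lt hyz.le (hyt.trans_le hs.1))
  rw [intervalIntegral.integral_neg, ← h, neg_neg] at h'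
  exact h'

end Tent

namespace PhaseD

variable (D : PhaseD)

def w (t : ℝ) : ℝ := rexp (-t) * (D.u t + D.u' t)

def W (t : ℝ) : ℝ := ∫ s in (0 : ℝ)..t, D.w s

lemma continuous_u : Continuous D.u := continuous_of_forall_sub_eq_integral D.locInt D.ftc

lemma locallyIntegrable_w : LocallyIntegrable D.w volume := by
  have hcont : Continuous fun t => rexp (-t) := by fun_prop
  have heq : D.w = fun t => rexp (-t) * D.u t + D.u' t * rexp (-t) := by
    ext t
    simp only [w]
    ring
  rw [heq]
  exact (hcont.mul D.continuous_u).locallyIntegrable.add (D.locInt.mul_continuous hcont)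

lemma W_sub (a b : ℝ) : D.W b - D.W a = ∫ s in a..b, D.w s :=
  intervalIntegral.integral_interval_sub_left
    (D.locallyIntegrable_w.intervalIntegrable _ _) (D.locallyIntegrable_w.intervalIntegrable _ _)

lemma ae_rightDeriv_W_eq_w : ∀ᵐ x, derivWithin D.W (Ioi x) x = D.w x := by
  filter_upwards [LocallyIntegrable.ae_hasDerivAt_integral D.locallyIntegrable_w] with x hx
  exact (hx 0).hasDerivWithinAt.derivWithin (uniqueDiffWithinAt_Ioi x)

lemma exists_lintegral_Ioi_lt_top :
    ∃ x₀, ∫⁻ s in Ioi x₀, ENNReal.ofReal (rexp (-s) * (D.u s + D.u' s) ^ 2) < ⊤ := by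
  obtain ⟨x₀, hx₀⟩ := (eventually_lt_of_limsup_lt D.plusCond).exists
  refine ⟨x₀, lt_top_iff_ne_top.2 fun htop => hx₀.ne ?_⟩
  rw [htop, top_add, ENNReal.mul_top (ENNReal.ofReal_pos.2 (exp_pos x₀)).ne']

lemma exists_lintegral_Ioi_w_sq_lt_top :
    ∃ x₀, ∫⁻ s in Ioi x₀, ENNReal.ofReal (D.w s ^ 2) < ⊤ := by
  obtain ⟨x₀, hx₀⟩ := D.exists_lintegral_Ioi_lt_top
  refine ⟨max x₀ 0, lt_of_le_of_lt ?_ hx₀⟩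
  refine (setLIntegral_mono' measurableSet_Ioi fun s hs => ENNReal.ofReal_le_ofReal ?_).trans
    (lintegral_mono_set (Ioi_subset_Ioi (le_max_left _ _)))
  have hs0 : 0 ≤ s := (le_max_right _ _).trans (le_of_lt hs)
  have hexp : rexp (-s) * (D.u s + D.u' s) ^ 2 = rexp s * D.w s ^ 2 := by
    rw [w, mul_pow, ← mul_assoc, sq (rexp (-s)), ← mul_assoc, ← exp_add, add_neg_cancel, exp_zero,
      one_mul]
  rw [hexp]
  exact le_mul_of_one_le_left (sq_nonneg _) (one_le_exp hs0)

variable {φ φ' : ℝ → ℝ} {a b C : ℝ}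

theorem integral_u_mul_add_integral_u'_mul (hφ : ∀ s t, φ t - φ s = ∫ x in s..t, φ' x)
    (hφ'm : Measurable φ') (hφ'C : ∀ t, |φ' t| ≤ C) (hφab : support φ ⊆ Ioo a b)
    (hφ'ab : support φ' ⊆ Ioc a b) :
    (∫ t, D.u t * (rexp (-t) * φ t)) + ∫ t, D.u' t * (rexp (-t) * (φ' t - φ t)) =
      ∫ t in a..b, D.w t * φ' t := by
  set h : ℝ → ℝ := fun t => rexp (-t) * φ t with h_def
  set h' : ℝ → ℝ := fun t => rexp (-t) * (φ' t - φ t) with h'_def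
  have hφc := continuous_of_bound_of_support_subset_Ioc hφ hφ'm hφ'C hφ'ab
  have hhc : Continuous h := by fun_prop
  have hh'm : Measurable h' := measurable_exp_neg_mul_sub hφ hφ'm hφ'C hφ'ab
  obtain ⟨K, hK⟩ := exists_bound_exp_neg_mul_sub hφ hφ'm hφ'C hφab hφ'ab
  have hh'ab : support h' ⊆ Ioc a b := support_exp_neg_mul_sub_subset hφab hφ'ab
  have hφ_zero : ∀ t ∉ Ioo a b, φ t = 0 := fun t ht => notMem_support.1 fun h => ht (hφab h)
  have hu' : IntervalIntegrable D.u' volume a b := D.locInt.intervalIntegrable a b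
  have I1 : IntervalIntegrable (fun t => D.u t * h t) volume a b :=
    (D.continuous_u.mul hhc).intervalIntegrable a b
  have I2 : IntervalIntegrable (fun t => D.u' t * h' t) volume a b :=
    hu'.mul_bdd hh'm.aestronglyMeasurable hK
  have I3 : IntervalIntegrable (fun t => D.u' t * h t + D.u t * h' t) volume a b :=
    (hu'.mul_continuousOn hhc.continuousOn).add
      ((D.continuous_u.intervalIntegrable a b).mul_bdd hh'm.aestronglyMeasurable hK)
  -- `u h + u' h' = w φ' - (u' h + u h')`, and the last term integrates to `[u h]_a^b = 0`.
  have hIBP : ∫ t in a..b, D.u' t * h t + D.u t * h' t = 0 := by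
    rw [integral_deriv_mul_eq_sub_of_forall_sub_eq_integral D.locInt D.ftc
      (integrable_of_bound_of_support_subset_Icc hh'm hK
        (hh'ab.trans Ioc_subset_Icc_self)).locallyIntegrable
      (sub_eq_integral_exp_neg_mul hφ hφ'm hφ'C hφ'ab),
      hφ_zero a (by simp), hφ_zero b (by simp)]
    ring
  rw [← intervalIntegral.integral_eq_integral_of_support_subset
      ((support_mul_subset_right _ _).trans ((support_mul_subset_right _ _).trans
        (hφab.trans Ioo_subset_Ioc_self))),
    ← intervalIntegral.integral_eq_integral_of_support_subset
      ((support_mul_subset_right _ _).trans hh'ab)]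
  calc (∫ t in a..b, D.u t * h t) + ∫ t in a..b, D.u' t * h' t
      = (∫ t in a..b, D.u t * h t + D.u' t * h' t) + ∫ t in a..b, D.u' t * h t + D.u t * h' t := by
        rw [intervalIntegral.integral_add I1 I2, hIBP, add_zero]
    _ = ∫ t in a..b, D.w t * φ' t := by
        rw [← intervalIntegral.integral_add (I1.add I2) I3]
        congr 1 with t
        simp only [h_def, h'_def, w]
        ring

end PhaseD

theorem PosMeasRepr.integral_w_mul_nonneg {D : PhaseD} {ν : Measure ℝ} (hν : PosMeasRepr D ν)
    {φ φ' : ℝ → ℝ} {a b C : ℝ} (hφ : ∀ s t, φ t - φ s = ∫ x in s..t, φ' x)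
    (hφ'm : Measurable φ') (hφ'C : ∀ t, |φ' t| ≤ C) (hφab : support φ ⊆ Ioo a b)
    (hφ'ab : support φ' ⊆ Ioc a b) (hφ0 : ∀ t, 0 ≤ φ t) :
    0 ≤ ∫ t in a..b, D.w t * φ' t := by
  rw [← D.integral_u_mul_add_integral_u'_mul hφ hφ'm hφ'C hφab hφ'ab,
    ← hν _ _ (testH1_exp_neg_mul hφ hφ'm hφ'C hφab hφ'ab)]
  exact integral_nonneg fun t => mul_nonneg (exp_pos _).le (hφ0 t)

theorem PosMeasRepr.concaveOn_W {D : PhaseD} {ν : Measure ℝ} (hν : PosMeasRepr D ν) :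
    ConcaveOn ℝ univ D.W := by
  refine concaveOn_of_slope_anti_adjacent convex_univ fun {x y z} _ _ hxy hyz => ?_
  have h := hν.integral_w_mul_nonneg (tent_sub hxy hyz) measurable_tentSlope
    (abs_tentSlope_le hxy hyz) (support_tent_subset hxy hyz) (support_tentSlope_subset hxy hyz)
    (tent_nonneg hxy hyz)
  rw [integral_mul_tentSlope hxy hyz (D.locallyIntegrable_w.intervalIntegrable x z),
    ← D.W_sub, ← D.W_sub] at h
  rw [div_eq_inv_mul, div_eq_inv_mul]
  linarith

/-- If `(u,μ) ∈ 𝒟` and `ω = u - u''` is a positive Borel measure,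
then `x ↦ e^{-x}(u(x)+u'(x))` has a representative that is non-increasing,
non-negative and tends to `0` at `+∞`. -/
theorem statement13 (D : PhaseD) (ν : Measure ℝ) (hν : PosMeasRepr D ν) :
    ∃ g : ℝ → ℝ,
      (∀ᵐ x : ℝ ∂volume, g x = Real.exp (-x) * (D.u x + D.u' x)) ∧
      Antitone g ∧ (∀ x : ℝ, 0 ≤ g x) ∧ Tendsto g atTop (nhds 0) := by
  set g : ℝ → ℝ := fun x => derivWithin D.W (Ioi x) x
  have hanti : Antitone g := fun x y hxy =>
    hν.concaveOn_W.antitoneOn_rightDeriv (by simp) (by simp) hxy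
  have hgw : ∀ᵐ x, g x = D.w x := D.ae_rightDeriv_W_eq_w
  obtain ⟨x₀, hx₀⟩ := D.exists_lintegral_Ioi_w_sq_lt_top
  have hlim : Tendsto g atTop (𝓝 0) := hanti.tendsto_atTop_zero_of_lintegral_sq_lt_top <|
    (lintegral_congr_ae (ae_restrict_of_ae (hgw.mono fun x hx => by rw [hx]))).trans_lt hx₀
  exact ⟨g, hgw, hanti, fun x => hanti.le_of_tendsto hlim x, hlim⟩

end
end

section
/- Let (u, μ) be a pair in 𝒟 such that the function u + u' belongs to L²(ℝ) and the measure υ is finite (υ(ℝ) < ∞). Then u belongs to H¹(ℝ), one has ‖u + u'‖²_{L²(ℝ)} = ‖u‖²_{H¹(ℝ)} := ∫_ℝ ( u(x)² + u'(x)² ) dx, and the measure μ is finite with μ(ℝ) = ‖u‖²_{H¹(ℝ)} + υ(ℝ). -/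
open MeasureTheory Filter Set

noncomputable section

/-! Write `f = u + u'`. Since `u` is absolutely continuous, `u²` is too, with derivative `2 u u'`,
so `f² = u² + u'² + (u²)'` almost everywhere. The weight `e^{-s} ≥ 1` on `(-∞, 0)` in the definition
of `𝒟` gives `u, u' ∈ L²(-∞, 0)`, hence `u(x)² → 0` as `x → -∞`. Integrating over `[c, -c]` bounds
`∫_c^{-c} (u² + u'²)` by `‖f‖² + u(c)²`, so `u, u' ∈ L²(ℝ)`; then `u² → 0` at both ends and the
integral of `(u²)'` over `ℝ` vanishes. The formula for `μ(ℝ)` is the decomposition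
`μ = υ + (u² + u'²) dx`. -/

open Topology

theorem integrable_sq_add_sq_iff {α : Type*} [MeasurableSpace α] {μ : Measure α} {f h : α → ℝ}
    (hf : AEStronglyMeasurable f μ) (hh : AEStronglyMeasurable h μ) :
    Integrable (fun x => f x ^ 2 + h x ^ 2) μ ↔ MemLp f 2 μ ∧ MemLp h 2 μ := by
  refine ⟨fun hfh => ⟨?_, ?_⟩, fun ⟨hf2, hh2⟩ => hf2.integrable_sq.add hh2.integrable_sq⟩
  · refine (memLp_two_iff_integrable_sq hf).2 <| hfh.mono' (hf.pow 2) <| .of_forall fun x => ?_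
    rw [Real.norm_of_nonneg (sq_nonneg _)]
    exact le_add_of_nonneg_right (sq_nonneg _)
  · refine (memLp_two_iff_integrable_sq hh).2 <| hfh.mono' (hh.pow 2) <| .of_forall fun x => ?_
    rw [Real.norm_of_nonneg (sq_nonneg _)]
    exact le_add_of_nonneg_left (sq_nonneg _)

theorem volume_eq_top_of_mem_atTop {s : Set ℝ} (hs : s ∈ atTop) : volume s = ⊤ := by
  obtain ⟨b, hb⟩ := mem_atTop_sets.1 hs
  exact top_le_iff.1 (Real.volume_Ici (a := b) ▸ measure_mono hb)

theorem volume_eq_top_of_mem_atBot {s : Set ℝ} (hs : s ∈ atBot) : volume s = ⊤ := by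
  obtain ⟨b, hb⟩ := mem_atBot_sets.1 hs
  exact top_le_iff.1 (Real.volume_Iic (a := b) ▸ measure_mono hb)

section

variable {u g : ℝ → ℝ}

theorem eq_add_intervalIntegral_of_sub_eq (hu : ∀ a b, u b - u a = ∫ x in a..b, g x) (c : ℝ) :
    u = fun x => u c + ∫ t in c..x, g t := by
  funext x
  linarith [hu c x]

theorem continuous_of_sub_eq_intervalIntegral (hg : LocallyIntegrable g volume)
    (hu : ∀ a b, u b - u a = ∫ x in a..b, g x) : Continuous u := by
  rw [eq_add_intervalIntegral_of_sub_eq hu 0]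
  exact continuous_const.add <| intervalIntegral.continuous_primitive
    (fun _ _ => (hg.integrableOn_isCompact isCompact_uIcc).intervalIntegrable) 0

theorem sq_sub_sq_eq_intervalIntegral (hg : LocallyIntegrable g volume)
    (hu : ∀ a b, u b - u a = ∫ x in a..b, g x) (a b : ℝ) :
    u b ^ 2 - u a ^ 2 = ∫ x in a..b, 2 * (u x * g x) := by
  have hac : AbsolutelyContinuousOnInterval u a b := by
    rw [eq_add_intervalIntegral_of_sub_eq hu a]
    exact (LipschitzWith.const (u a)).lipschitzOnWith.absolutelyContinuousOnInterval.add
      ((hg.integrableOn_isCompact isCompact_uIcc).intervalIntegrable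
        |>.absolutelyContinuousOnInterval_intervalIntegral left_mem_uIcc)
  have hderiv : ∀ᵐ x, HasDerivAt u (g x) x := by
    filter_upwards [LocallyIntegrable.ae_hasDerivAt_integral hg] with x hx
    rw [eq_add_intervalIntegral_of_sub_eq hu 0]
    exact (hx 0).const_add _
  rw [sq, sq, ← hac.integral_deriv_mul_eq_sub hac]
  refine intervalIntegral.integral_congr_ae ?_
  filter_upwards [hderiv] with x hx _
  rw [hx.deriv]
  ring

theorem tendsto_sq_atTop_zero (hg : LocallyIntegrable g volume)
    (hu : ∀ a b, u b - u a = ∫ x in a..b, g x) {c : ℝ}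
    (hu2 : MemLp u 2 (volume.restrict (Ioi c))) (hg2 : MemLp g 2 (volume.restrict (Ioi c))) :
    Tendsto (fun x => u x ^ 2) atTop (𝓝 0) := by
  have hug : IntegrableOn (fun x => u x * g x) (Ioi c) := hu2.integrable_mul hg2
  have hlim : Tendsto (fun x => u x ^ 2) atTop (𝓝 (u c ^ 2 + ∫ x in Ioi c, 2 * (u x * g x))) :=
    ((intervalIntegral_tendsto_integral_Ioi c (hug.const_mul 2) tendsto_id).const_add
      (u c ^ 2)).congr fun x => by rw [id, ← sq_sub_sq_eq_intervalIntegral hg hu]; ring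
  have hzero := (show IntegrableAtFilter (fun x => u x ^ 2) atTop volume from
    ⟨Ioi c, Ioi_mem_atTop c, hu2.integrable_sq⟩).eq_zero_of_tendsto
      (fun _ => volume_eq_top_of_mem_atTop) hlim
  rwa [hzero] at hlim

theorem tendsto_sq_atBot_zero (hg : LocallyIntegrable g volume)
    (hu : ∀ a b, u b - u a = ∫ x in a..b, g x) {c : ℝ}
    (hu2 : MemLp u 2 (volume.restrict (Iic c))) (hg2 : MemLp g 2 (volume.restrict (Iic c))) :
    Tendsto (fun x => u x ^ 2) atBot (𝓝 0) := by
  have hug : IntegrableOn (fun x => u x * g x) (Iic c) := hu2.integrable_mul hg2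
  have hlim : Tendsto (fun x => u x ^ 2) atBot (𝓝 (u c ^ 2 - ∫ x in Iic c, 2 * (u x * g x))) :=
    ((intervalIntegral_tendsto_integral_Iic c (hug.const_mul 2) tendsto_id).const_sub
      (u c ^ 2)).congr fun x => by rw [id, ← sq_sub_sq_eq_intervalIntegral hg hu]; ring
  have hzero := (show IntegrableAtFilter (fun x => u x ^ 2) atBot volume from
    ⟨Iic c, Iic_mem_atBot c, hu2.integrable_sq⟩).eq_zero_of_tendsto
      (fun _ => volume_eq_top_of_mem_atBot) hlim
  rwa [hzero] at hlim

theorem integrable_sq_add_sq_of_integrable_add_sq (hg : LocallyIntegrable g volume)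
    (hg2 : LocallyIntegrable (fun x => g x ^ 2) volume) (hu : ∀ a b, u b - u a = ∫ x in a..b, g x)
    (hf : Integrable (fun x => (u x + g x) ^ 2)) (hbot : Tendsto (fun x => u x ^ 2) atBot (𝓝 0)) :
    Integrable (fun x => u x ^ 2 + g x ^ 2) := by
  have hcont := continuous_of_sub_eq_intervalIntegral hg hu
  have hloc : LocallyIntegrable (fun x => u x ^ 2 + g x ^ 2) volume :=
    (hcont.pow 2).locallyIntegrable.add hg2
  refine integrable_of_intervalIntegral_norm_bounded ((∫ x, (u x + g x) ^ 2) + 1)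
    (fun _ => (hloc.integrableOn_isCompact isCompact_Icc).mono_set Ioc_subset_Icc_self)
    tendsto_id tendsto_neg_atBot_atTop ?_
  filter_upwards [hbot.eventually (gt_mem_nhds one_pos), eventually_le_atBot 0] with c hc hc0
  have hcross : IntervalIntegrable (fun x => 2 * (u x * g x)) volume c (-c) :=
    ((hg.integrableOn_isCompact isCompact_uIcc).intervalIntegrable.continuousOn_mul
      hcont.continuousOn).const_mul 2
  have hsplit : ∫ x in c..-c, ‖u x ^ 2 + g x ^ 2‖ =
      (∫ x in c..-c, (u x + g x) ^ 2) - ∫ x in c..-c, 2 * (u x * g x) := by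
    rw [← intervalIntegral.integral_sub hf.intervalIntegrable hcross]
    refine intervalIntegral.integral_congr fun x _ => ?_
    simp only [Real.norm_of_nonneg (by positivity : 0 ≤ u x ^ 2 + g x ^ 2)]
    ring
  have hle : ∫ x in c..-c, (u x + g x) ^ 2 ≤ ∫ x, (u x + g x) ^ 2 := by
    rw [intervalIntegral.integral_of_le (by linarith)]
    exact setIntegral_le_integral hf (.of_forall fun x => sq_nonneg _)
  rw [id, hsplit, ← sq_sub_sq_eq_intervalIntegral hg hu]
  nlinarith [sq_nonneg (u (-c))]

theorem integral_add_sq_eq_integral_sq_add_sq (hg : LocallyIntegrable g volume)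
    (hu : ∀ a b, u b - u a = ∫ x in a..b, g x) (hu2 : MemLp u 2 volume) (hg2 : MemLp g 2 volume) :
    ∫ x, (u x + g x) ^ 2 = ∫ x, (u x ^ 2 + g x ^ 2) := by
  have hug : Integrable (fun x => 2 * (u x * g x)) := (hu2.integrable_mul hg2).const_mul 2
  have htop := tendsto_sq_atTop_zero hg hu (hu2.restrict (Ioi 0)) (hg2.restrict (Ioi 0))
  have hbot := tendsto_sq_atBot_zero hg hu (hu2.restrict (Iic 0)) (hg2.restrict (Iic 0))
  -- `∫_{-x}^{x} 2ug = u(x)² - u(-x)²` tends both to `∫ 2ug` and to `0 - 0`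
  have hcross : ∫ x, 2 * (u x * g x) = 0 := by
    refine tendsto_nhds_unique
      (intervalIntegral_tendsto_integral hug tendsto_neg_atTop_atBot tendsto_id) ?_
    simpa only [id, Function.comp_def, ← sq_sub_sq_eq_intervalIntegral hg hu, sub_zero] using
      htop.sub (hbot.comp tendsto_neg_atTop_atBot)
  calc ∫ x, (u x + g x) ^ 2 = ∫ x, ((u x ^ 2 + g x ^ 2) + 2 * (u x * g x)) :=
        integral_congr_ae (.of_forall fun x => by ring)
    _ = ∫ x, (u x ^ 2 + g x ^ 2) := by
        rw [integral_add (f := fun x => u x ^ 2 + g x ^ 2)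
          (hu2.integrable_sq.add hg2.integrable_sq) hug, hcross, add_zero]

end

theorem PhaseD.integrableOn_Iic_sq_add_sq (D : PhaseD) :
    IntegrableOn (fun x => D.u x ^ 2 + D.u' x ^ 2) (Iic 0) := by
  have hcont := continuous_of_sub_eq_intervalIntegral D.locInt D.ftc
  refine (integrableOn_Iic_iff_integrableOn_Iio enorm_ne_top).2
    ⟨((hcont.pow 2).aestronglyMeasurable.add D.locSq.aestronglyMeasurable).restrict, ?_⟩
  rw [hasFiniteIntegral_iff_ofReal (.of_forall fun x => by positivity)]
  refine lt_of_le_of_lt (setLIntegral_mono' measurableSet_Iio fun s hs => ?_)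
    (ENNReal.add_lt_top.1 D.minusCond).1
  exact ENNReal.ofReal_le_ofReal <| le_mul_of_one_le_left (by positivity) <|
    Real.one_le_exp (neg_nonneg.2 (le_of_lt hs))

theorem PhaseD.μ_univ_eq (D : PhaseD) (h : Integrable (fun x => D.u x ^ 2 + D.u' x ^ 2)) :
    D.μ Set.univ = ENNReal.ofReal (∫ x, (D.u x ^ 2 + D.u' x ^ 2)) + D.υ Set.univ := by
  rw [D.decomp, Measure.add_apply, withDensity_apply _ MeasurableSet.univ, Measure.restrict_univ,
    ofReal_integral_eq_lintegral_ofReal h (.of_forall fun x => by positivity), add_comm]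

theorem statement19_general (D : PhaseD)
    (h1 : MemLp (fun x => D.u x + D.u' x) 2 volume) :
    MemLp D.u 2 volume ∧ MemLp D.u' 2 volume ∧
      (∫ x, (D.u x + D.u' x) ^ 2) = ∫ x, ((D.u x) ^ 2 + (D.u' x) ^ 2) ∧
      D.μ Set.univ =
        ENNReal.ofReal (∫ x, ((D.u x) ^ 2 + (D.u' x) ^ 2)) + D.υ Set.univ := by
  have hcont := continuous_of_sub_eq_intervalIntegral D.locInt D.ftc
  have hbot : Tendsto (fun x => D.u x ^ 2) atBot (𝓝 0) := by
    obtain ⟨hu2, hg2⟩ := (integrable_sq_add_sq_iff (μ := volume.restrict (Iic 0))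
      hcont.aestronglyMeasurable D.meas_u'.aestronglyMeasurable).1 D.integrableOn_Iic_sq_add_sq
    exact tendsto_sq_atBot_zero D.locInt D.ftc hu2 hg2
  have hint :=
    integrable_sq_add_sq_of_integrable_add_sq D.locInt D.locSq D.ftc h1.integrable_sq hbot
  obtain ⟨hu2, hg2⟩ := (integrable_sq_add_sq_iff hcont.aestronglyMeasurable
    D.meas_u'.aestronglyMeasurable).1 hint
  exact ⟨hu2, hg2, integral_add_sq_eq_integral_sq_add_sq D.locInt D.ftc hu2 hg2,
    D.μ_univ_eq hint⟩

/-- If `(u,μ) ∈ 𝒟`, `u + u' ∈ L²(ℝ)` and `υ(ℝ) < ∞`, then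
`u ∈ H¹(ℝ)`, `‖u + u'‖²_{L²} = ‖u‖²_{H¹} = ∫ (u² + u'²)`, and `μ` is finite with
`μ(ℝ) = ‖u‖²_{H¹} + υ(ℝ)`. -/
theorem statement19 (D : PhaseD)
    (h1 : MemLp (fun x => D.u x + D.u' x) 2 volume)
    (h2 : D.υ Set.univ < ⊤) :
    MemLp D.u 2 volume ∧ MemLp D.u' 2 volume ∧
      (∫ x, (D.u x + D.u' x) ^ 2) = ∫ x, ((D.u x) ^ 2 + (D.u' x) ^ 2) ∧
      D.μ Set.univ =
        ENNReal.ofReal (∫ x, ((D.u x) ^ 2 + (D.u' x) ^ 2)) + D.υ Set.univ :=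
  statement19_general D h1

end
end
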